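/- arXiv:1910.06165 — 2 statements merged into one kernel-verified Lean document; each statement's English description precedes it below -/
import Mathlib

section
/- Let f, g ∈ R⟨X⟩ be nonzero and uniformly compatible with a labelled quiver Q. If f + g is uniformly compatible with Q, then σ(f) = σ(g). If fg is uniformly compatible with Q and fg ≠ 0, then s(f) ∩ t(g) ≠ ∅ and σ(fg) = {(u, w) ∈ s(g) × t(f) : ∃ v ∈ s(f) ∩ t(g), (u, v) ∈ σ(g) and (v, w) ∈ σ(f)}. -/
open scoped BigOperators

/-- The free `R`-algebra `R⟨X⟩` on `X`, as the monoid algebra over `R`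
of the free monoid `⟨X⟩` of words over `X`. -/
abbrev FreeAlg (R X : Type*) [CommRing R] := MonoidAlgebra R (FreeMonoid X)

/-- A labelled quiver `Q = (V, E, X, s, t, l)`: a directed multigraph with vertex set `V`,
edge set `E`, source and target maps `s, t : E → V` and labelling `l : E → X`. -/
structure LabelledQuiver (V E X : Type*) where
  src : E → V
  tgt : E → V
  lab : E → X

/-- Paths in a labelled quiver `Q`; `LQPath Q u w` is the type of paths with source `u` and
target `w`.  `nil v` is the empty path at `v`; `cons e p` appends the edge `e` after `p`. -/
inductive LQPath {V E X : Type*} (Q : LabelledQuiver V E X) : V → V → Type _ where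
  | nil (v : V) : LQPath Q v v
  | cons {u : V} (e : E) (p : LQPath Q u (Q.src e)) : LQPath Q u (Q.tgt e)

namespace LQPath
variable {V E X : Type*} {Q : LabelledQuiver V E X}
/-- The label `l(p) = l(eₙ)⋯l(e₁) ∈ ⟨X⟩` of a path; the empty path has label `1`. -/
def label : {u w : V} → LQPath Q u w → FreeMonoid X
  | _, _, .nil _ => 1
  | _, _, .cons e p => FreeMonoid.of (Q.lab e) * p.label
end LQPath

namespace LabelledQuiver

variable {V E X : Type*} (Q : LabelledQuiver V E X)

/-- The set of signatures `σ(m) = {(s(p), t(p)) : p a path in Q with l(p) = m}`. -/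
def sigmaM (m : FreeMonoid X) : Set (V × V) :=
  {vw | ∃ p : LQPath Q vw.1 vw.2, p.label = m}

variable {R : Type*} [CommRing R]

/-- The set of signatures `σ(f) = ⋂_{m ∈ supp(f)} σ(m)` of a polynomial. -/
def sigmaP (f : FreeAlg R X) : Set (V × V) :=
  ⋂ m ∈ (f.coeff : FreeMonoid X →₀ R).support, Q.sigmaM m

/-- `f` is compatible with `Q` if `σ(f) ≠ ∅`. -/
def Compatible (f : FreeAlg R X) : Prop :=
  (Q.sigmaP f).Nonempty

/-- `f` is uniformly compatible with `Q` if it is compatible and all monomials in its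
support have the same set of signatures. -/
def UniformlyCompatible (f : FreeAlg R X) : Prop :=
  Q.Compatible f ∧
    ∀ m ∈ (f.coeff : FreeMonoid X →₀ R).support, ∀ m' ∈ (f.coeff : FreeMonoid X →₀ R).support,
      Q.sigmaM m = Q.sigmaM m'

/-- The set of sources `s(f)` of a polynomial: the projection of `σ(f)` to the first
component. -/
def srcSet (f : FreeAlg R X) : Set V := Prod.fst '' Q.sigmaP f

/-- The set of targets `t(f)` of a polynomial: the projection of `σ(f)` to the second
component. -/
def tgtSet (f : FreeAlg R X) : Set V := Prod.snd '' Q.sigmaP f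

end LabelledQuiver

/-- The set `{(u, w) ∈ s(g) × t(f) : ∃ v ∈ s(f) ∩ t(g), (u, v) ∈ σ(g) ∧ (v, w) ∈ σ(f)}`. -/
def prodSig {V E X R : Type*} [CommRing R] (Q : LabelledQuiver V E X)
    (f g : FreeAlg R X) : Set (V × V) :=
  {uw | uw.1 ∈ Q.srcSet g ∧ uw.2 ∈ Q.tgtSet f ∧
    ∃ v, v ∈ Q.srcSet f ∩ Q.tgtSet g ∧ (uw.1, v) ∈ Q.sigmaP g ∧ (v, uw.2) ∈ Q.sigmaP f}

namespace LQPath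
variable {V E X : Type*} {Q : LabelledQuiver V E X}

def comp : {u v w : V} → LQPath Q v w → LQPath Q u v → LQPath Q u w
  | _, _, _, .nil _, q => q
  | _, _, _, .cons e p, q => .cons e (p.comp q)

theorem label_comp : ∀ {u v w : V} (p : LQPath Q v w) (q : LQPath Q u v),
    (p.comp q).label = p.label * q.label
  | _, _, _, .nil _, q => by simp [comp, label]
  | _, _, _, .cons e p, q => by simp [comp, label, label_comp p q, mul_assoc]

theorem split : ∀ {u w : V} (p : LQPath Q u w) (m1 m2 : FreeMonoid X),
    p.label = m1 * m2 → ∃ v, ∃ p1 : LQPath Q v w, ∃ p2 : LQPath Q u v,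
      p1.label = m1 ∧ p2.label = m2
  | _, _, .nil v, m1, m2, h => by
    have h1 : m1.toList ++ m2.toList = ([] : List X) := by
      have := congrArg FreeMonoid.toList h.symm
      simpa [label] using this
    rcases List.append_eq_nil_iff.mp h1 with ⟨e1, e2⟩
    have hm1 : m1 = 1 := FreeMonoid.toList.injective (by simpa using e1)
    have hm2 : m2 = 1 := FreeMonoid.toList.injective (by simpa using e2)
    exact ⟨v, .nil v, .nil v, by simp [label, hm1], by simp [label, hm2]⟩
  | _, _, .cons e p, m1, m2, h => by
    rcases hm1 : m1.toList with _ | ⟨x, l1⟩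
    · have hm1' : m1 = 1 := FreeMonoid.toList.injective (by simpa using hm1)
      subst hm1'
      exact ⟨_, .nil _, .cons e p, by simp [label], by simpa using h⟩
    · have hm1' : m1 = FreeMonoid.of x * FreeMonoid.ofList l1 :=
        FreeMonoid.toList.injective (by simp [hm1])
      subst hm1'
      simp only [label] at h
      have h' := congrArg FreeMonoid.toList h
      simp [List.cons_eq_cons] at h'
      have hp : p.label = FreeMonoid.ofList l1 * m2 :=
        FreeMonoid.toList.injective (by simpa using h'.2)
      obtain ⟨v, p1, p2, h1, h2⟩ := split p _ _ hp
      exact ⟨v, .cons e p1, p2, by simp [label, h1, h'.1], h2⟩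
end LQPath
theorem mem_sigmaM_mul {V E X : Type*} (Q : LabelledQuiver V E X) (m1 m2 : FreeMonoid X)
    (u w : V) : (u, w) ∈ Q.sigmaM (m1 * m2) ↔
      ∃ v, (u, v) ∈ Q.sigmaM m2 ∧ (v, w) ∈ Q.sigmaM m1 := by
  constructor
  · rintro ⟨p, hp⟩
    obtain ⟨v, p1, p2, h1, h2⟩ := p.split m1 m2 hp
    exact ⟨v, ⟨p2, h2⟩, ⟨p1, h1⟩⟩
  · rintro ⟨v, ⟨p2, h2⟩, ⟨p1, h1⟩⟩
    exact ⟨p1.comp p2, by simp [LQPath.label_comp, h1, h2]⟩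

theorem uc_sigmaP_eq {R V E X : Type*} [CommRing R] (Q : LabelledQuiver V E X)
    (h : FreeAlg R X) (hu : Q.UniformlyCompatible h) {m : FreeMonoid X}
    (hm : m ∈ h.coeff.support) : Q.sigmaP h = Q.sigmaM m := by
  apply subset_antisymm
  · exact Set.biInter_subset_of_mem hm
  · intro x hx
    simp only [LabelledQuiver.sigmaP, Set.mem_iInter]
    intro m' hm'
    rw [hu.2 m' hm' m hm]
    exact hx
/-- For nonzero uniformly compatible `f, g`: if `f + g` is uniformly
compatible, then `σ(f) = σ(g)`; and if `f·g` is uniformly compatible and `f·g ≠ 0`, then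
`s(f) ∩ t(g) ≠ ∅` and
`σ(f·g) = {(u, w) ∈ s(g) × t(f) : ∃ v ∈ s(f) ∩ t(g), (u, v) ∈ σ(g) ∧ (v, w) ∈ σ(f)}`. -/
theorem uniformlyCompatible_converse {R V E X : Type*} [CommRing R] (Q : LabelledQuiver V E X)
    (f g : FreeAlg R X) (hf0 : f ≠ 0) (hg0 : g ≠ 0)
    (hf : Q.UniformlyCompatible f) (hg : Q.UniformlyCompatible g) :
    (Q.UniformlyCompatible (f + g) → Q.sigmaP f = Q.sigmaP g) ∧
      (Q.UniformlyCompatible (f * g) → f * g ≠ 0 →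
        (Q.srcSet f ∩ Q.tgtSet g).Nonempty ∧ Q.sigmaP (f * g) = prodSig Q f g) := by
  constructor
  · -- sum case
    intro hUC
    obtain ⟨m0, hm0⟩ := Finsupp.support_nonempty_iff.mpr (fun h => hf0 (MonoidAlgebra.coeff_eq_zero.mp h))
    obtain ⟨m0', hm0'⟩ := Finsupp.support_nonempty_iff.mpr (fun h => hg0 (MonoidAlgebra.coeff_eq_zero.mp h))
    have claim : ∀ m ∈ f.coeff.support,
        ∀ m' ∈ g.coeff.support, Q.sigmaM m = Q.sigmaM m' := by
      intro m hm m' hm'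
      by_cases hmg : m ∈ g.coeff.support
      · exact hg.2 m hmg m' hm'
      · have hmfg : m ∈ (f + g).coeff.support := by
          rw [Finsupp.mem_support_iff] at *
          have hadd : (f + g).coeff m = f.coeff m + g.coeff m := rfl
          simp only [not_not] at hmg
          rw [hadd, hmg, add_zero]; exact hm
        by_cases hmf : m' ∈ f.coeff.support
        · exact hf.2 m hm m' hmf
        · have hm'fg : m' ∈ (f + g).coeff.support := by
            rw [Finsupp.mem_support_iff] at *
            have hadd : (f + g).coeff m' = f.coeff m' + g.coeff m' := rfl
            simp only [not_not] at hmf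
            rw [hadd, hmf, zero_add]; exact hm'
          exact hUC.2 m hmfg m' hm'fg
    rw [uc_sigmaP_eq Q f hf hm0, uc_sigmaP_eq Q g hg hm0']
    exact claim m0 hm0 m0' hm0'
  · -- product case
    intro hUC hne0
    classical
    obtain ⟨m, hm⟩ := Finsupp.support_nonempty_iff.mpr (fun h => hne0 (MonoidAlgebra.coeff_eq_zero.mp h))
    obtain ⟨m1, hm1, m2, hm2, hprod⟩ := Finset.mem_mul.mp (MonoidAlgebra.support_coeff_mul_subset f g hm)
    have hPfg : Q.sigmaP (f * g) = Q.sigmaM (m1 * m2) := by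
      rw [uc_sigmaP_eq Q (f * g) hUC hm, hprod]
    have hPf : Q.sigmaP f = Q.sigmaM m1 := uc_sigmaP_eq Q f hf hm1
    have hPg : Q.sigmaP g = Q.sigmaM m2 := uc_sigmaP_eq Q g hg hm2
    constructor
    · obtain ⟨⟨u, w⟩, huw⟩ := hUC.1
      rw [hPfg] at huw
      obtain ⟨v, h2, h1⟩ := (mem_sigmaM_mul Q m1 m2 u w).mp huw
      exact ⟨v, ⟨(v, w), by rw [hPf]; exact h1, rfl⟩, ⟨(u, v), by rw [hPg]; exact h2, rfl⟩⟩
    · ext ⟨u, w⟩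
      rw [hPfg]
      constructor
      · intro huw
        obtain ⟨v, h2, h1⟩ := (mem_sigmaM_mul Q m1 m2 u w).mp huw
        refine ⟨⟨(u, v), by rw [hPg]; exact h2, rfl⟩, ⟨(v, w), by rw [hPf]; exact h1, rfl⟩,
          v, ⟨⟨(v, w), by rw [hPf]; exact h1, rfl⟩, ⟨(u, v), by rw [hPg]; exact h2, rfl⟩⟩,
          by rw [hPg]; exact h2, by rw [hPf]; exact h1⟩
      · rintro ⟨-, -, v, -, h2, h1⟩
        rw [hPg] at h2; rw [hPf] at h1
        exact (mem_sigmaM_mul Q m1 m2 u w).mpr ⟨v, h2, h1⟩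
end

section
/- Let K be a field, let F ⊆ K⟨X⟩ be a set of polynomials having no constant term, and let f be an element of the two-sided ideal (F). Let Q be a labelled quiver in which distinct edges have distinct labels in X, and assume that f and all elements of F are compatible with Q. Then for every representation (𝒱, φ) of Q such that the realizations of the elements of F with respect to (𝒱, φ) are zero, the realization of f with respect to (𝒱, φ) is zero. -/
open scoped BigOperators

/-- The monomial in `R⟨X⟩` corresponding to a word `m ∈ ⟨X⟩`. -/
noncomputable def monom (R : Type*) [CommRing R] {X : Type*} (m : FreeMonoid X) : FreeAlg R X :=
  MonoidAlgebra.of R (FreeMonoid X) m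

/-- `h` is obtained from `f` by a rewriting step using `g`: some monomial `m_g` in the
support of `g` divides a monomial `a·m_g·b` in the support of `f`, and
`h = f + λ·a·g·b` for some `λ ∈ R`. -/
def RewriteStep {R X : Type*} [CommRing R] (g f h : FreeAlg R X) : Prop :=
  ∃ (a b mg : FreeMonoid X) (lam : R),
    mg ∈ (g.coeff : FreeMonoid X →₀ R).support ∧
    a * mg * b ∈ (f.coeff : FreeMonoid X →₀ R).support ∧
    h = f + lam • (monom R a * g * monom R b)

/-- `f` can be rewritten to `h` using the set `G`: there is a finite chain of rewriting
steps, each using an element of `G`, leading from `f` to `h`. -/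
def RewritesTo {R X : Type*} [CommRing R] (G : Set (FreeAlg R X)) (f h : FreeAlg R X) : Prop :=
  Relation.ReflTransGen (fun p q => ∃ g ∈ G, RewriteStep g p q) f h

/-- Membership in the two-sided ideal `(F)` generated by `F`:
`f` is a finite sum `Σᵢ aᵢ·fᵢ·bᵢ` with `aᵢ, bᵢ ∈ R⟨X⟩` and `fᵢ ∈ F`. -/
def MemIdeal {R X : Type*} [CommRing R] (F : Set (FreeAlg R X)) (f : FreeAlg R X) : Prop :=
  ∃ (n : ℕ) (a b g : Fin n → FreeAlg R X),
    (∀ i, g i ∈ F) ∧ f = ∑ i, a i * g i * b i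

/-- A representation `(𝒱, φ)` of a labelled quiver `Q` by `K`-vector spaces: a vector space
`𝒱_v` for each vertex `v` and a `K`-linear map `φ(e) : 𝒱_{s(e)} → 𝒱_{t(e)}` for each edge. -/
structure QuiverRep (K : Type*) [Field K] {V E X : Type*} (Q : LabelledQuiver V E X) where
  space : V → Type*
  [addCommGroup : ∀ v, AddCommGroup (space v)]
  [module : ∀ v, Module K (space v)]
  map : (e : E) → space (Q.src e) →ₗ[K] space (Q.tgt e)

attribute [instance] QuiverRep.addCommGroup QuiverRep.module

namespace QuiverRep

variable {K : Type*} [Field K] {V E X : Type*} {Q : LabelledQuiver V E X}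

/-- The linear map `φ(eₙ)⋯φ(e₁)` induced by a path; the empty path induces the identity. -/
def pathMap (ρ : QuiverRep K Q) : {u w : V} → LQPath Q u w → (ρ.space u →ₗ[K] ρ.space w)
  | _, _, .nil _ => LinearMap.id
  | _, _, .cons e p => (ρ.map e).comp (ρ.pathMap p)

/-- A representation is consistent with the labelling if any two paths with the same source,
the same target and the same label induce the same linear map. -/
def Consistent (ρ : QuiverRep K Q) : Prop :=
  ∀ (u w : V) (p q : LQPath Q u w), p.label = q.label → ρ.pathMap p = ρ.pathMap q

/-- The realization `φ_{v,w}(f)` of a polynomial `f` w.r.t. a representation: the `K`-linear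
extension of the assignment sending the label of a path from `v` to `w` to the composition of
the linear maps along the path (an arbitrary such path is chosen for each monomial; for a
consistent representation the result does not depend on this choice). -/
noncomputable def realize (ρ : QuiverRep K Q) (v w : V) (f : FreeAlg K X) :
    ρ.space v →ₗ[K] ρ.space w :=
  Finsupp.sum (f.coeff : FreeMonoid X →₀ K) fun m c =>
    letI := Classical.propDecidable (∃ p : LQPath Q v w, p.label = m)
    c • (if h : ∃ p : LQPath Q v w, p.label = m then ρ.pathMap h.choose else 0)

end QuiverRep

/-! Unique labels let the whole representation act on `⊕ᵥ 𝒱_v` through a single algebra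
homomorphism `K⟨X⟩ → End(⊕ᵥ 𝒱_v)`, sending a letter to the map of the unique edge carrying it.
On the summand `𝒱_v` a polynomial `g` with signature `(v, w)` then acts as its realization
`𝒱_v → 𝒱_w`; if `g` has no constant term it kills every other summand, since a nonempty path is
pinned to its source by its first label. So a polynomial of `F` with zero realization is sent to
`0`, hence so is every element of the ideal `(F)`, and reading off the `(v, w)` block of the image
of `f` gives its realization. -/

namespace LQPath

variable {V E X : Type*} {Q : LabelledQuiver V E X}

@[simp] lemma label_nil (v : V) : (nil (Q := Q) v).label = 1 := by
  rw [label]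

@[simp] lemma label_cons {u : V} (e : E) (p : LQPath Q u (Q.src e)) :
    (cons e p).label = FreeMonoid.of (Q.lab e) * p.label := by
  rw [label]

lemma eq_of_label_eq_one {u w : V} (p : LQPath Q u w) (hp : p.label = 1) : u = w := by
  cases p with
  | nil => rfl
  | cons e p => simpa using congrArg FreeMonoid.toList hp

lemma exists_label_eq_mul_of_label_ne_one {u w : V} (p : LQPath Q u w) (hp : p.label ≠ 1) :
    ∃ (e : E) (m : FreeMonoid X), Q.src e = u ∧ p.label = m * FreeMonoid.of (Q.lab e) := by
  induction p with
  | nil => exact absurd (label_nil _) hp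
  | cons e p ih =>
    by_cases hp₁ : p.label = 1
    · exact ⟨e, 1, (p.eq_of_label_eq_one hp₁).symm, by simp [hp₁]⟩
    · obtain ⟨e', m, hsrc, hlabel⟩ := ih hp₁
      exact ⟨e', FreeMonoid.of (Q.lab e) * m, hsrc, by rw [label_cons, hlabel, mul_assoc]⟩

end LQPath

lemma MemIdeal.map_eq_zero {R X B 𝓕 : Type*} [CommRing R] [Semiring B]
    [FunLike 𝓕 (FreeAlg R X) B] [RingHomClass 𝓕 (FreeAlg R X) B]
    {F : Set (FreeAlg R X)} {f : FreeAlg R X}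
    (hf : MemIdeal F f) (φ : 𝓕) (hF : ∀ g ∈ F, φ g = 0) : φ f = 0 := by
  obtain ⟨n, a, b, g, hg, rfl⟩ := hf
  simp [map_sum, map_mul, hF _ (hg _)]

namespace QuiverRep

variable {K : Type*} [Field K] {V E X : Type*} {Q : LabelledQuiver V E X}
  (ρ : QuiverRep K Q)

@[simp] lemma pathMap_nil (v : V) : ρ.pathMap (.nil v) = LinearMap.id := by
  rw [pathMap]

@[simp] lemma pathMap_cons {u : V} (e : E) (p : LQPath Q u (Q.src e)) :
    ρ.pathMap (.cons e p) = ρ.map e ∘ₗ ρ.pathMap p := by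
  rw [pathMap]

variable [DecidableEq V]

noncomputable def edgeEnd (e : E) : Module.End K (DirectSum V ρ.space) :=
  DirectSum.lof K V ρ.space (Q.tgt e) ∘ₗ ρ.map e ∘ₗ DirectSum.component K V ρ.space (Q.src e)

noncomputable def letterEnd : X → Module.End K (DirectSum V ρ.space) :=
  Function.extend Q.lab ρ.edgeEnd 0

noncomputable def toEnd : FreeAlg K X →ₐ[K] Module.End K (DirectSum V ρ.space) :=
  MonoidAlgebra.lift K _ (FreeMonoid X) (FreeMonoid.lift ρ.letterEnd)

lemma edgeEnd_lof_src (e : E) (a : ρ.space (Q.src e)) :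
    ρ.edgeEnd e (DirectSum.lof K V ρ.space (Q.src e) a) =
      DirectSum.lof K V ρ.space (Q.tgt e) (ρ.map e a) := by
  simp [edgeEnd, DirectSum.component.lof_self]

lemma edgeEnd_lof_of_ne (e : E) {u : V} (hu : u ≠ Q.src e) (a : ρ.space u) :
    ρ.edgeEnd e (DirectSum.lof K V ρ.space u a) = 0 := by
  simp [edgeEnd, DirectSum.component.of, hu]

variable {ρ}

lemma letterEnd_lab (hlab : Function.Injective Q.lab) (e : E) :
    ρ.letterEnd (Q.lab e) = ρ.edgeEnd e :=
  hlab.extend_apply _ _ e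

lemma lift_letterEnd_label_lof (hlab : Function.Injective Q.lab) {u w : V} (p : LQPath Q u w)
    (a : ρ.space u) :
    FreeMonoid.lift ρ.letterEnd p.label (DirectSum.lof K V ρ.space u a) =
      DirectSum.lof K V ρ.space w (ρ.pathMap p a) := by
  induction p with
  | nil => rw [LQPath.label_nil, map_one, pathMap_nil]; rfl
  | cons e p ih =>
    rw [LQPath.label_cons, map_mul, Module.End.mul_apply, ih, FreeMonoid.lift_eval_of,
      letterEnd_lab hlab, edgeEnd_lof_src, pathMap_cons]
    rfl

lemma lift_letterEnd_label_lof_of_ne (hlab : Function.Injective Q.lab) {v w : V}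
    (p : LQPath Q v w) (hp : p.label ≠ 1) {u : V} (hu : u ≠ v) (a : ρ.space u) :
    FreeMonoid.lift ρ.letterEnd p.label (DirectSum.lof K V ρ.space u a) = 0 := by
  obtain ⟨e, m, rfl, hlabel⟩ := p.exists_label_eq_mul_of_label_ne_one hp
  rw [hlabel, map_mul, Module.End.mul_apply, FreeMonoid.lift_eval_of, letterEnd_lab hlab,
    edgeEnd_lof_of_ne ρ e hu, map_zero]

lemma toEnd_apply (g : FreeAlg K X) :
    ρ.toEnd g = g.coeff.sum fun m c => c • FreeMonoid.lift ρ.letterEnd m :=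
  MonoidAlgebra.lift_apply _ _

lemma toEnd_lof (hlab : Function.Injective Q.lab) {g : FreeAlg K X} {v w : V}
    (hσ : (v, w) ∈ Q.sigmaP g) (a : ρ.space v) :
    ρ.toEnd g (DirectSum.lof K V ρ.space v a) =
      DirectSum.lof K V ρ.space w (ρ.realize v w g a) := by
  rw [toEnd_apply, realize, Finsupp.sum, Finsupp.sum, LinearMap.sum_apply, LinearMap.sum_apply,
    map_sum]
  refine Finset.sum_congr rfl fun m hm => ?_
  have hpath : ∃ p : LQPath Q v w, p.label = m := Set.mem_iInter₂.mp hσ m hm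
  rw [LinearMap.smul_apply, LinearMap.smul_apply, dif_pos hpath, map_smul,
    ← lift_letterEnd_label_lof hlab, hpath.choose_spec]

lemma toEnd_lof_of_ne (hlab : Function.Injective Q.lab) {g : FreeAlg K X}
    (hg : (1 : FreeMonoid X) ∉ g.coeff.support) {v w : V} (hσ : (v, w) ∈ Q.sigmaP g)
    {u : V} (hu : u ≠ v) (a : ρ.space u) :
    ρ.toEnd g (DirectSum.lof K V ρ.space u a) = 0 := by
  rw [toEnd_apply, Finsupp.sum, LinearMap.sum_apply]
  refine Finset.sum_eq_zero fun m hm => ?_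
  obtain ⟨p, rfl⟩ : ∃ p : LQPath Q v w, p.label = m := Set.mem_iInter₂.mp hσ m hm
  rw [LinearMap.smul_apply,
    lift_letterEnd_label_lof_of_ne hlab p (fun h => hg (h ▸ hm)) hu, smul_zero]

lemma toEnd_eq_zero_of_realize_eq_zero (hlab : Function.Injective Q.lab) {g : FreeAlg K X}
    (hg : (1 : FreeMonoid X) ∉ g.coeff.support) {v w : V} (hσ : (v, w) ∈ Q.sigmaP g)
    (hz : ρ.realize v w g = 0) : ρ.toEnd g = 0 := by
  refine DirectSum.linearMap_ext K fun u => LinearMap.ext fun a => ?_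
  by_cases hu : u = v
  · subst hu
    simp [toEnd_lof hlab hσ, hz]
  · simp [toEnd_lof_of_ne hlab hg hσ hu]

lemma realize_eq_zero_of_toEnd_eq_zero (hlab : Function.Injective Q.lab) {g : FreeAlg K X}
    {v w : V} (hσ : (v, w) ∈ Q.sigmaP g) (hg : ρ.toEnd g = 0) : ρ.realize v w g = 0 := by
  ext a
  simpa [hg, DirectSum.component.lof_self] using
    (congrArg (DirectSum.component K V ρ.space w) (toEnd_lof hlab hσ a)).symm

end QuiverRep

theorem main_theorem_unique_labels_general {K X : Type*} [Field K] (F : Set (FreeAlg K X))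
    (hconst : ∀ g ∈ F, (1 : FreeMonoid X) ∉ ((g : FreeAlg K X).coeff : FreeMonoid X →₀ K).support)
    (f : FreeAlg K X) (hf : MemIdeal F f) {V E : Type*} (Q : LabelledQuiver V E X)
    (hlab : Function.Injective Q.lab)
    (hF : ∀ g ∈ F, Q.Compatible g)
    (ρ : QuiverRep K Q)
    (hzero : ∀ g ∈ F, ∀ v w : V, (v, w) ∈ Q.sigmaP g → ρ.realize v w g = 0) :
    ∀ v w : V, (v, w) ∈ Q.sigmaP f → ρ.realize v w f = 0 := by
  classical
  have hFzero : ∀ g ∈ F, ρ.toEnd g = 0 := fun g hg => by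
    obtain ⟨⟨v, w⟩, hσ⟩ := hF g hg
    exact ρ.toEnd_eq_zero_of_realize_eq_zero hlab (hconst g hg) hσ (hzero g hg v w hσ)
  exact fun v w hσ => ρ.realize_eq_zero_of_toEnd_eq_zero hlab hσ (hf.map_eq_zero ρ.toEnd hFzero)

/-- Let `F ⊆ K⟨X⟩` consist of polynomials without constant term and let `f`
lie in the two-sided ideal generated by `F`. Let `Q` be a labelled quiver whose edges have
pairwise distinct labels and assume `f` and all elements of `F` are compatible with `Q`. Then
for every representation of `Q` such that the realizations of the elements of `F` are zero,
the realization of `f` is zero. -/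
theorem main_theorem_unique_labels {K X : Type*} [Field K] (F : Set (FreeAlg K X))
    (hconst : ∀ g ∈ F, (1 : FreeMonoid X) ∉ ((g : FreeAlg K X).coeff : FreeMonoid X →₀ K).support)
    (f : FreeAlg K X) (hf : MemIdeal F f) {V E : Type*} (Q : LabelledQuiver V E X)
    (hlab : Function.Injective Q.lab)
    (hcf : Q.Compatible f) (hF : ∀ g ∈ F, Q.Compatible g)
    (ρ : QuiverRep K Q)
    (hzero : ∀ g ∈ F, ∀ v w : V, (v, w) ∈ Q.sigmaP g → ρ.realize v w g = 0) :
    ∀ v w : V, (v, w) ∈ Q.sigmaP f → ρ.realize v w f = 0 :=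
  main_theorem_unique_labels_general F hconst f hf Q hlab hF ρ hzero
end
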